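/- arXiv:math/0505317 — 2 statements merged into one kernel-verified Lean document; each statement's English description precedes it below -/
import Mathlib

section
/- For every i ≥ 0, Φ_i(x) = (x/i!)·(x^2·d/dx)^i ( φ(x)/x ), where φ(x)/x is the formal Laurent series x^{−1} + Σ_{j≥2} φ_j x^{j−1} (with φ(x) = 1 + Σ_{j≥2} φ_j x^j) and (x^2·d/dx)^i denotes the i-fold application of the operator f ↦ x^2·df/dx on formal Laurent series in x; in particular Φ_0(x) = φ(x). -/
noncomputable section

/-- The coefficient ring `ℚ[R₂, R₃, …]`: we use `MvPolynomial ℕ ℚ`, where the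
variable `MvPolynomial.X i` plays the role of the free cumulant indeterminate `Rᵢ`
(only the variables with `i ≥ 2` actually occur). -/
abbrev A : Type := MvPolynomial ℕ ℚ

/-- `R(x) = 1 + Σ_{i≥2} Rᵢ xⁱ`. -/
def Rser : PowerSeries A :=
  PowerSeries.mk fun n => if n = 0 then 1 else if 2 ≤ n then MvPolynomial.X n else 0

/-- `F(x) = x / R(x)`. -/
def Fser : PowerSeries A := PowerSeries.X * PowerSeries.invOfUnit Rser 1

/-- Composition `f(g)` of formal power series (the standard coefficient formula,
valid when `g` has zero constant term). -/
def psComp {R : Type*} [CommRing R] (f g : PowerSeries R) : PowerSeries R :=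
  PowerSeries.mk fun n => ∑ m ∈ Finset.range (n + 1),
    PowerSeries.coeff m f * PowerSeries.coeff n (g ^ m)

/-- `f/X` : the series with coefficients shifted down by one (honest division by `X`
when `f` has zero constant term). -/
def shiftPS {R : Type*} [CommRing R] (f : PowerSeries R) : PowerSeries R :=
  PowerSeries.mk fun n => PowerSeries.coeff (n + 1) f

/-- `y/(1 - j·y)`. -/
def argSer (j : ℕ) : PowerSeries A :=
  PowerSeries.X * PowerSeries.invOfUnit (1 - (j : A) • PowerSeries.X) 1

/-- Kerov's character polynomial `Σ_k`, defined (following Biane and Stanley) by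
`Σ_k = -(1/k)·[y¹] ∏_{j=0}^{k-1} (F⁻¹(y/(1-jy)))^{-1}`, where each factor is the
Laurent series `y⁻¹·hⱼ⁻¹` with `hⱼ = F⁻¹(y/(1-jy))/y` a power series with constant
term `1`; so `[y¹]` of the product is `[y^{k+1}] ∏_j hⱼ⁻¹`. -/
def KSigma (Finv : PowerSeries A) (k : ℕ) : A :=
  (-(1 : ℚ) / k) • PowerSeries.coeff (k + 1)
    (∏ j ∈ Finset.range k,
      PowerSeries.invOfUnit (shiftPS (psComp Finv (argSer j))) 1)

/-- The graded piece `Σ_{k,2n} = [u^{k+1-2n}] Σ_k(R₂u², R₃u³, …)`. -/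
def KSigmaW (Finv : PowerSeries A) (k n : ℕ) : A :=
  (MvPolynomial.aeval
      (fun i => Polynomial.C (MvPolynomial.X i : A) * Polynomial.X ^ i)
      (KSigma Finv k)).coeff (k + 1 - 2 * n)

/-- `1/C(t) = 1 - Σ_{i≥2} (i-1) Rᵢ tⁱ`. -/
def Cden : PowerSeries A :=
  PowerSeries.mk fun n =>
    if n = 0 then 1 else if 2 ≤ n then -(((n : ℚ) - 1) • MvPolynomial.X n) else 0

/-- `C(t) = (1 - Σ_{i≥2} (i-1) Rᵢ tⁱ)⁻¹ = Σ_m C_m t^m`. -/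
def Cser : PowerSeries A := PowerSeries.invOfUnit Cden 1

/-- The operator `D = t·d/dt`. -/
def Dop {R : Type*} [CommRing R] (f : PowerSeries R) : PowerSeries R :=
  PowerSeries.mk fun n => (n : R) * PowerSeries.coeff n f

/-- `Schain j = C(t)(D+(j-1)I)C(t)⋯(D+I)C(t)·DC(t) ⋯`: the chain with
`Schain 0 = C(t)`, `Schain (j+1) = C(t)·(D + j·I)(Schain j)`, so that
`Schain (m-1)` is the product `C(D+(m-2)I)C⋯(D+I)C·DC` appearing in `P_m`. -/
def Schain : ℕ → PowerSeries A
  | 0 => Cser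
  | j + 1 => Cser * (Dop (Schain j) + (j : ℚ) • Schain j)

/-- `P_m(t) = -(1/m!)·C(t)(D+(m-2)I)C(t)⋯(D+I)C(t)·DC(t)`, for `m ≥ 1`
(so `P₁ = -C`, `P₂ = -(1/2)C·DC`). -/
def Pser (m : ℕ) : PowerSeries A :=
  (-(1 : ℚ) / m.factorial) • Schain (m - 1)

/-- `P_λ(t) = ∏_j P_{λ_j}(t)` for a partition (multiset) `λ`. -/
def Pprod (lam : Multiset ℕ) : PowerSeries A := (lam.map Pser).prod

/-- `m̂_λ`: the monomial symmetric function `m_λ` evaluated at `x_i = i` for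
`1 ≤ i ≤ k-1` and `x_i = 0` for `i ≥ k`:  the sum, over all exponent vectors
`α` on the `k-1` variables whose multiset of nonzero values is `λ`, of
`∏_i i^{α_i}`. -/
def mhat (k : ℕ) (lam : Multiset ℕ) : ℚ :=
  ∑ α : Fin (k - 1) → Fin (lam.sum + 1),
    if (Multiset.filter (fun x => x ≠ 0)
        (Multiset.map (fun i => (α i : ℕ)) (Finset.univ : Finset (Fin (k - 1))).val)) = lam
    then ∏ i : Fin (k - 1), ((i : ℕ) + 1 : ℚ) ^ ((α i : ℕ)) else 0

def phiSer (Finv : PowerSeries A) : PowerSeries A :=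
  PowerSeries.invOfUnit (shiftPS Finv) 1

def psComp2 (f : PowerSeries A) (s : MvPowerSeries (Fin 2) A) : MvPowerSeries (Fin 2) A :=
  fun d => ∑ m ∈ Finset.range (d 0 + d 1 + 1),
    PowerSeries.coeff m f * MvPowerSeries.coeff d (s ^ m)

def PhiJU (Finv : PowerSeries A) (j : ℕ) : MvPowerSeries (Fin 2) A :=
  (1 - (j : A) • (MvPowerSeries.X 1 * MvPowerSeries.X 0)) *
    psComp2 (phiSer Finv)
      (MvPowerSeries.X 0 *
        MvPowerSeries.invOfUnit (1 - (j : A) • (MvPowerSeries.X 1 * MvPowerSeries.X 0)) 1)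

def Phi2 (Finv : PowerSeries A) : MvPowerSeries (Fin 2) A := PhiJU Finv 1

def Phii (Finv : PowerSeries A) (i : ℕ) : PowerSeries A :=
  PowerSeries.mk fun n =>
    MvPowerSeries.coeff (Finsupp.single 0 n + Finsupp.single 1 i) (Phi2 Finv)

def phiOverX (Finv : PowerSeries A) : ℤ → A :=
  fun n => if 0 ≤ n + 1 then PowerSeries.coeff (n + 1).toNat (phiSer Finv) else 0

def opXsq (c : ℤ → A) : ℤ → A := fun n => (n - 1 : ℤ) • c (n - 1)


def fun2 (a b : ℕ) : Fin 2 →₀ ℕ := Finsupp.single 0 a + Finsupp.single 1 b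

@[simp] lemma fun2_apply0 (a b : ℕ) : fun2 a b 0 = a := by
  simp [fun2, Finsupp.single_apply]

@[simp] lemma fun2_apply1 (a b : ℕ) : fun2 a b 1 = b := by
  simp [fun2, Finsupp.single_apply]

lemma eq_fun2 (d : Fin 2 →₀ ℕ) : d = fun2 (d 0) (d 1) := by
  ext i
  match i with
  | 0 => simp
  | 1 => simp

lemma fun2_eq_iff (a b c d : ℕ) : fun2 a b = fun2 c d ↔ a = c ∧ b = d := by
  constructor
  · intro h
    constructor
    · have := congrArg (fun f => f 0) h; simpa using this
    · have := congrArg (fun f => f 1) h; simpa using this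
  · rintro ⟨rfl, rfl⟩; rfl

lemma fun2_eq_zero_iff (a b : ℕ) : fun2 a b = 0 ↔ a = 0 ∧ b = 0 := by
  constructor
  · intro h
    constructor
    · have := congrArg (fun f => f 0) h; simpa using this
    · have := congrArg (fun f => f 1) h; simpa using this
  · rintro ⟨rfl, rfl⟩; simp [fun2]

lemma fun2_le_iff (a b : ℕ) (d : Fin 2 →₀ ℕ) : fun2 a b ≤ d ↔ a ≤ d 0 ∧ b ≤ d 1 := by
  rw [Finsupp.le_def]
  constructor
  · intro h; exact ⟨by simpa using h 0, by simpa using h 1⟩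
  · intro h i
    match i with
    | 0 => simpa using h.1
    | 1 => simpa using h.2

lemma sub_fun2 (d : Fin 2 →₀ ℕ) (a b : ℕ) : d - fun2 a b = fun2 (d 0 - a) (d 1 - b) := by
  ext i
  match i with
  | 0 => simp [Finsupp.tsub_apply]
  | 1 => simp [Finsupp.tsub_apply]

def Gser : MvPowerSeries (Fin 2) A := fun d => if d 0 = d 1 then 1 else 0

@[simp] lemma coeff_Gser (d : Fin 2 →₀ ℕ) :
    MvPowerSeries.coeff d Gser = if d 0 = d 1 then 1 else 0 := rfl

def Zser : MvPowerSeries (Fin 2) A := MvPowerSeries.X 1 * MvPowerSeries.X 0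

lemma Zser_eq : Zser = MvPowerSeries.monomial (fun2 1 1) 1 := by
  rw [Zser, MvPowerSeries.X_def, MvPowerSeries.X_def, MvPowerSeries.monomial_mul_monomial,
    one_mul]
  congr 1
  rw [fun2, add_comm]

lemma coeff_Zser_mul (f : MvPowerSeries (Fin 2) A) (d : Fin 2 →₀ ℕ) :
    MvPowerSeries.coeff d (Zser * f) =
      if 1 ≤ d 0 ∧ 1 ≤ d 1 then MvPowerSeries.coeff (fun2 (d 0 - 1) (d 1 - 1)) f else 0 := by
  rw [Zser_eq, MvPowerSeries.coeff_monomial_mul]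
  simp only [fun2_le_iff, sub_fun2, one_mul]

lemma one_sub_Z_mul_G : (1 - Zser) * Gser = 1 := by
  apply MvPowerSeries.ext; intro d
  rw [sub_mul, one_mul, map_sub, coeff_Zser_mul, coeff_Gser, MvPowerSeries.coeff_one]
  have h0 : (d = 0) = (d 0 = 0 ∧ d 1 = 0) := by
    apply propext
    constructor
    · intro h; rw [h]; simp
    · intro h; rw [eq_fun2 d, h.1, h.2]; simp [fun2]
  simp only [coeff_Gser, fun2_apply0, fun2_apply1, h0]
  split_ifs <;> first | (exfalso; omega) | ring1

lemma constCoeff_one_sub_Z : MvPowerSeries.constantCoeff (1 - Zser) = 1 := by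
  rw [map_sub, map_one, Zser, map_mul]
  simp

lemma invOfUnit_one_sub_Z : MvPowerSeries.invOfUnit (1 - Zser) 1 = Gser := by
  have h2 : (1 - Zser) * MvPowerSeries.invOfUnit (1 - Zser) 1 = 1 :=
    MvPowerSeries.mul_invOfUnit _ 1 (by rw [constCoeff_one_sub_Z]; rfl)
  calc MvPowerSeries.invOfUnit (1 - Zser) 1
      = ((1 - Zser) * Gser) * MvPowerSeries.invOfUnit (1 - Zser) 1 := by
        rw [one_sub_Z_mul_G, one_mul]
    _ = Gser * ((1 - Zser) * MvPowerSeries.invOfUnit (1 - Zser) 1) := by ring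
    _ = Gser := by rw [h2, mul_one]

lemma sum_antidiagonal_fun2 (d : Fin 2 →₀ ℕ) (f : (Fin 2 →₀ ℕ) → (Fin 2 →₀ ℕ) → A) :
    ∑ p ∈ Finset.HasAntidiagonal.antidiagonal d, f p.1 p.2
      = ∑ a ∈ Finset.range (d 0 + 1), ∑ b ∈ Finset.range (d 1 + 1),
          f (fun2 a b) (fun2 (d 0 - a) (d 1 - b)) := by
  rw [← Finset.sum_product']
  apply Finset.sum_nbij' (fun p => (p.1 0, p.1 1))
    (fun q => (fun2 q.1 q.2, fun2 (d 0 - q.1) (d 1 - q.2)))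
  · intro p hp
    rw [Finset.HasAntidiagonal.mem_antidiagonal] at hp
    have h0 : p.1 0 + p.2 0 = d 0 := by rw [← hp]; simp
    have h1 : p.1 1 + p.2 1 = d 1 := by rw [← hp]; simp
    simp only [Finset.mem_product, Finset.mem_range]
    omega
  · intro q hq
    simp only [Finset.mem_product, Finset.mem_range] at hq
    rw [Finset.HasAntidiagonal.mem_antidiagonal]
    ext i
    match i with
    | 0 => simp; omega
    | 1 => simp; omega
  · intro p hp
    rw [Finset.HasAntidiagonal.mem_antidiagonal] at hp
    have h0 : p.1 0 + p.2 0 = d 0 := by rw [← hp]; simp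
    have h1 : p.1 1 + p.2 1 = d 1 := by rw [← hp]; simp
    have e1 : fun2 (p.1 0) (p.1 1) = p.1 := (eq_fun2 p.1).symm
    have e2 : fun2 (d 0 - p.1 0) (d 1 - p.1 1) = p.2 := by
      rw [eq_fun2 p.2]; congr 1 <;> omega
    rw [e1, e2]
  · intro q hq
    simp
  · intro p hp
    rw [Finset.HasAntidiagonal.mem_antidiagonal] at hp
    have h0 : p.1 0 + p.2 0 = d 0 := by rw [← hp]; simp
    have h1 : p.1 1 + p.2 1 = d 1 := by rw [← hp]; simp
    rw [eq_fun2 p.1, eq_fun2 p.2]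
    congr 2 <;> simp <;> omega

lemma hockey (m : ℕ) : ∀ n : ℕ, ∑ k ∈ Finset.range (n + 1), Nat.choose (k + m) k
    = Nat.choose (n + m + 1) n := by
  intro n
  induction n with
  | zero => simp
  | succ n ih =>
    rw [Finset.sum_range_succ, ih]
    have : n + 1 + m + 1 = (n + m + 1) + 1 := by omega
    rw [this, Nat.choose_succ_succ' (n + m + 1) n]
    have h2 : n + 1 + m = n + m + 1 := by omega
    rw [h2]

def sSer : MvPowerSeries (Fin 2) A := MvPowerSeries.X 0 * Gser

lemma coeff_sSer (d : Fin 2 →₀ ℕ) :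
    MvPowerSeries.coeff d sSer = if d 0 = d 1 + 1 then 1 else 0 := by
  rw [sSer, MvPowerSeries.X_def, MvPowerSeries.coeff_monomial_mul]
  have hs : Finsupp.single (0 : Fin 2) 1 = fun2 1 0 := by simp [fun2]
  rw [hs]
  simp only [fun2_le_iff, sub_fun2, one_mul, coeff_Gser, fun2_apply0, fun2_apply1]
  split_ifs <;> first | rfl | (exfalso; omega)

lemma coeff_sSer_pow (m : ℕ) : ∀ d : Fin 2 →₀ ℕ,
    MvPowerSeries.coeff d (sSer ^ (m + 1))
      = if d 0 = d 1 + (m + 1) then ((d 1 + m).choose (d 1) : A) else 0 := by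
  induction m with
  | zero =>
    intro d
    rw [pow_one, coeff_sSer]
    simp
  | succ m ih =>
    intro d
    rw [pow_succ', MvPowerSeries.coeff_mul,
      sum_antidiagonal_fun2 d (fun p q =>
        MvPowerSeries.coeff p sSer * MvPowerSeries.coeff q (sSer ^ (m + 1)))]
    have hterm : ∀ a b : ℕ,
        MvPowerSeries.coeff (fun2 a b) sSer
          * MvPowerSeries.coeff (fun2 (d 0 - a) (d 1 - b)) (sSer ^ (m + 1))
        = if a = b + 1 then
            (if d 0 - a = d 1 - b + (m + 1) then ((d 1 - b + m).choose (d 1 - b) : A) else 0)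
          else 0 := by
      intro a b
      rw [coeff_sSer, ih]
      simp only [fun2_apply0, fun2_apply1]
      split_ifs <;> first | ring1 | (exfalso; omega)
    simp only [hterm]
    rw [Finset.sum_comm]
    by_cases hd : d 0 = d 1 + (m + 1 + 1)
    · have hrow : ∀ b ∈ Finset.range (d 1 + 1),
          (∑ a ∈ Finset.range (d 0 + 1), if a = b + 1 then
            (if d 0 - a = d 1 - b + (m + 1) then ((d 1 - b + m).choose (d 1 - b) : A) else 0)
          else 0) = ((d 1 - b + m).choose (d 1 - b) : A) := by
        intro b hb
        rw [Finset.mem_range] at hb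
        rw [Finset.sum_ite_eq' (Finset.range (d 0 + 1)) (b + 1)]
        rw [if_pos (by rw [Finset.mem_range]; omega), if_pos (by omega)]
      rw [Finset.sum_congr rfl hrow]
      have hre : ∀ b ∈ Finset.range (d 1 + 1),
          ((d 1 - b + m).choose (d 1 - b) : A) = (fun k => ((k + m).choose k : A)) (d 1 - b) := by
        intro b _; rfl
      rw [Finset.sum_congr rfl hre]
      have := Finset.sum_range_reflect (fun k => ((k + m).choose k : A)) (d 1 + 1)
      simp only [Nat.add_sub_cancel] at this
      rw [this]
      rw [if_pos hd]
      rw [← Nat.cast_sum]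
      rw [hockey m (d 1)]
      norm_num [Nat.add_assoc]
    · rw [if_neg hd]
      apply Finset.sum_eq_zero
      intro a ha
      apply Finset.sum_eq_zero
      intro b hb
      rw [Finset.mem_range] at ha hb
      split_ifs <;> first | rfl | (exfalso; omega)

lemma nat_cast_mul_eq_smul (c : ℕ) (x : A) : ((c : ℕ) : A) * x = ((c : ℕ) : ℚ) • x := by
  rw [Algebra.smul_def, map_natCast]

lemma fall_eq (a : ℕ) : ∀ i : ℕ,
    ∏ t ∈ Finset.range i, ((a : ℚ) - t) = (i.factorial : ℚ) * (a.choose i) := by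
  intro i
  induction i with
  | zero => simp
  | succ i ih =>
    rw [Finset.prod_range_succ, ih]
    rcases lt_trichotomy i a with h | h | h
    · have hc : (a : ℚ) - i = ((a - i : ℕ) : ℚ) := by push_cast [h.le]; ring
      have key : i.factorial * a.choose i * (a - i) = (i + 1).factorial * a.choose (i + 1) := by
        rw [Nat.factorial_succ, Nat.mul_assoc, ← Nat.choose_succ_right_eq]
        ring
      calc (i.factorial : ℚ) * (a.choose i) * ((a : ℚ) - i)
          = ((i.factorial * a.choose i * (a - i) : ℕ) : ℚ) := by rw [hc]; push_cast; ring
        _ = (((i + 1).factorial * a.choose (i + 1) : ℕ) : ℚ) := by rw [key]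
        _ = _ := by push_cast; ring
    · have h1 : a.choose (i + 1) = 0 := Nat.choose_eq_zero_of_lt (by omega)
      have h2 : (a : ℚ) - i = 0 := by rw [h]; ring
      rw [h1, h2]
      simp
    · have h1 : a.choose i = 0 := Nat.choose_eq_zero_of_lt h
      have h2 : a.choose (i + 1) = 0 := Nat.choose_eq_zero_of_lt (by omega)
      simp [h1, h2]

lemma key_rat (n i : ℕ) (hi : 1 ≤ i) (hn : 2 ≤ n) :
    (((n - 1).choose i : ℚ)) - ((n - 2).choose (i - 1) : ℚ)
      = (1 / i.factorial) * ∏ t ∈ Finset.range i, ((n : ℚ) - 2 - t) := by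
  have hcast : ∀ t : ℕ, (n : ℚ) - 2 - t = ((n - 2 : ℕ) : ℚ) - t := by
    intro t
    have : ((n - 2 : ℕ) : ℚ) = (n : ℚ) - 2 := by push_cast [hn]; ring
    rw [this]
  rw [Finset.prod_congr rfl (fun t _ => hcast t), fall_eq (n - 2) i]
  have hfac : (i.factorial : ℚ) ≠ 0 := by positivity
  rw [← mul_assoc, one_div_mul_cancel hfac, one_mul]
  have hp : (n - 1).choose i = (n - 2).choose (i - 1) + (n - 2).choose i := by
    have h1 : n - 1 = (n - 2) + 1 := by omega
    have h2 : i = (i - 1) + 1 := by omega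
    rw [h1, h2, Nat.choose_succ_succ' (n - 2) (i - 1)]
    congr 2
  rw [hp]
  push_cast
  ring

lemma arg_eq :
    (MvPowerSeries.X 0 : MvPowerSeries (Fin 2) A) *
        MvPowerSeries.invOfUnit
          (1 - ((1 : ℕ) : A) • (MvPowerSeries.X 1 * MvPowerSeries.X 0)) 1
      = sSer := by
  rw [Nat.cast_one, one_smul]
  have : (MvPowerSeries.X 1 * MvPowerSeries.X 0 : MvPowerSeries (Fin 2) A) = Zser := rfl
  rw [this, invOfUnit_one_sub_Z, sSer]

lemma coeff_psComp2_s (f : PowerSeries A) (a b : ℕ) :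
    MvPowerSeries.coeff (fun2 a b) (psComp2 f sSer)
      = if b ≤ a then ((a - 1).choose b : A) * PowerSeries.coeff (a - b) f else 0 := by
  rw [MvPowerSeries.coeff_apply]
  show (∑ m ∈ Finset.range (fun2 a b 0 + fun2 a b 1 + 1),
      PowerSeries.coeff m f * MvPowerSeries.coeff (fun2 a b) (sSer ^ m)) = _
  simp only [fun2_apply0, fun2_apply1]
  by_cases hba : b < a
  · rw [Finset.sum_eq_single (a - b)]
    · obtain ⟨m', hm'⟩ : ∃ m', a - b = m' + 1 := ⟨a - b - 1, by omega⟩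
      rw [hm', coeff_sSer_pow m' (fun2 a b)]
      simp only [fun2_apply0, fun2_apply1]
      rw [if_pos (by omega), if_pos (by omega), ← hm']
      have hbm : b + m' = a - 1 := by omega
      rw [mul_comm, hbm]
    · intro m hm hne
      cases m with
      | zero =>
        rw [pow_zero, MvPowerSeries.coeff_one, if_neg]
        · rw [mul_zero]
        · rw [fun2_eq_zero_iff]; omega
      | succ m' =>
        rw [coeff_sSer_pow m' (fun2 a b)]
        simp only [fun2_apply0, fun2_apply1]
        rw [if_neg (by omega), mul_zero]
    · intro h
      exfalso
      apply h
      rw [Finset.mem_range]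
      omega
  · by_cases hab : a = b
    · subst hab
      by_cases ha : a = 0
      · subst ha
        rw [Finset.sum_eq_single 0]
        · rw [pow_zero, MvPowerSeries.coeff_one, if_pos (by rw [fun2_eq_zero_iff]; omega)]
          rw [if_pos (le_refl 0)]
          simp [mul_comm]
        · intro m hm hne
          obtain ⟨m', rfl⟩ : ∃ m', m = m' + 1 := ⟨m - 1, by omega⟩
          rw [coeff_sSer_pow m' (fun2 0 0)]
          simp only [fun2_apply0, fun2_apply1]
          rw [if_neg (by omega), mul_zero]
        · intro h; exfalso; apply h; rw [Finset.mem_range]; omega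
      · rw [if_pos (le_refl a)]
        have hz : ((a - 1).choose a : A) = 0 := by
          rw [Nat.choose_eq_zero_of_lt (by omega), Nat.cast_zero]
        rw [hz, zero_mul]
        apply Finset.sum_eq_zero
        intro m hm
        cases m with
        | zero =>
          rw [pow_zero, MvPowerSeries.coeff_one, if_neg, mul_zero]
          rw [fun2_eq_zero_iff]; omega
        | succ m' =>
          rw [coeff_sSer_pow m' (fun2 a a)]
          simp only [fun2_apply0, fun2_apply1]
          rw [if_neg (by omega), mul_zero]
    · rw [if_neg (by omega)]
      apply Finset.sum_eq_zero
      intro m hm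
      cases m with
      | zero =>
        rw [pow_zero, MvPowerSeries.coeff_one, if_neg, mul_zero]
        rw [fun2_eq_zero_iff]; omega
      | succ m' =>
        rw [coeff_sSer_pow m' (fun2 a b)]
        simp only [fun2_apply0, fun2_apply1]
        rw [if_neg (by omega), mul_zero]

lemma coeff_Phi2 (Finv : PowerSeries A) (n i : ℕ) :
    MvPowerSeries.coeff (fun2 n i) (Phi2 Finv)
      = ((1 / i.factorial : ℚ) * ∏ t ∈ Finset.range i, ((n : ℚ) - 2 - t)) •
          (if i ≤ n then PowerSeries.coeff (n - i) (phiSer Finv) else 0) := by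
  have hPhi : Phi2 Finv = (1 - Zser) * psComp2 (phiSer Finv) sSer := by
    rw [Phi2, PhiJU, arg_eq, Nat.cast_one, one_smul]
    rfl
  rw [hPhi, sub_mul, one_mul, map_sub, coeff_Zser_mul, coeff_psComp2_s]
  simp only [fun2_apply0, fun2_apply1]
  set P := PowerSeries.coeff (n - i) (phiSer Finv) with hP
  by_cases hi0 : i = 0
  · subst hi0
    rw [if_neg (by omega : ¬(1 ≤ n ∧ 1 ≤ 0)), sub_zero, if_pos (Nat.zero_le n),
      if_pos (Nat.zero_le n)]
    simp
  · by_cases hin : i ≤ n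
    · rw [if_pos hin, if_pos hin, if_pos (by omega : 1 ≤ n ∧ 1 ≤ i)]
      rw [coeff_psComp2_s]
      rw [if_pos (by omega : i - 1 ≤ n - 1)]
      have hidx : n - 1 - (i - 1) = n - i := by omega
      rw [hidx, ← hP]
      rw [nat_cast_mul_eq_smul, nat_cast_mul_eq_smul, ← sub_smul]
      congr 1
      have h21 : n - 1 - 1 = n - 2 := by omega
      rw [h21]
      by_cases hn2 : 2 ≤ n
      · rw [key_rat n i (by omega) hn2]
      · have hn1 : n = 1 := by omega
        have hi1 : i = 1 := by omega
        subst hn1; subst hi1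
        norm_num [Finset.prod_range_one]
    · rw [if_neg hin]
      by_cases h11 : 1 ≤ n ∧ 1 ≤ i
      · rw [if_pos h11, coeff_psComp2_s, if_neg (by omega : ¬(i - 1 ≤ n - 1))]
        simp [hin]
      · rw [if_neg h11]
        simp [hin]

lemma opXsq_iter (c : ℤ → A) : ∀ (i : ℕ) (m : ℤ),
    (opXsq^[i]) c m = (∏ t ∈ Finset.range i, (m - 1 - (t : ℤ))) • c (m - i) := by
  intro i
  induction i with
  | zero => intro m; simp
  | succ i ih =>
    intro m
    rw [Function.iterate_succ_apply']
    show (m - 1) • (opXsq^[i] c) (m - 1) = _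
    rw [ih (m - 1), smul_smul, Finset.prod_range_succ']
    have h1 : m - 1 - (i : ℤ) = m - ((i : ℕ) + 1 : ℕ) := by push_cast; ring
    have h2 : ∀ t ∈ Finset.range i, m - 1 - ((t + 1 : ℕ) : ℤ) = m - 1 - 1 - (t : ℤ) := by
      intro t _; push_cast; ring
    rw [Finset.prod_congr rfl h2, ← h1]
    congr 1
    ring

theorem stmt15 (i : ℕ)
    (Finv : PowerSeries A) (hFinv0 : PowerSeries.constantCoeff Finv = 0)
    (hFinv : psComp Fser Finv = PowerSeries.X) :
    (∀ n : ℤ,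
      (if 0 ≤ n then PowerSeries.coeff n.toNat (Phii Finv i) else 0)
        = (1 / (i.factorial : ℚ)) • (opXsq^[i] (phiOverX Finv)) (n - 1))
    ∧ Phii Finv 0 = phiSer Finv := by
  constructor
  · intro n
    by_cases hn : 0 ≤ n
    · rw [if_pos hn]
      have hL : PowerSeries.coeff n.toNat (Phii Finv i)
          = MvPowerSeries.coeff (fun2 n.toNat i) (Phi2 Finv) := by
        rw [Phii, PowerSeries.coeff_mk]
        rfl
      rw [hL, coeff_Phi2, opXsq_iter (phiOverX Finv) i (n - 1)]
      have hphi : phiOverX Finv (n - 1 - (i : ℕ))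
          = (if i ≤ n.toNat then PowerSeries.coeff (n.toNat - i) (phiSer Finv) else 0) := by
        simp only [phiOverX]
        by_cases hin : i ≤ n.toNat
        · rw [if_pos (show (0 : ℤ) ≤ n - 1 - (i : ℕ) + 1 by omega), if_pos hin,
            show (n - 1 - (i : ℕ) + 1).toNat = n.toNat - i by omega]
        · rw [if_neg (show ¬ (0 : ℤ) ≤ n - 1 - (i : ℕ) + 1 by omega), if_neg hin]
      rw [hphi, ← Int.cast_smul_eq_zsmul ℚ, smul_smul]
      congr 1
      have hnn : ((n.toNat : ℕ) : ℚ) = (n : ℚ) := by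
        rw [← Int.cast_natCast, Int.toNat_of_nonneg hn]
      rw [hnn]
      congr 1
      rw [Int.cast_prod]
      apply Finset.prod_congr rfl
      intro t _
      push_cast
      ring
    · rw [if_neg hn, opXsq_iter (phiOverX Finv) i (n - 1)]
      have h0 : phiOverX Finv (n - 1 - (i : ℕ)) = 0 := by
        simp only [phiOverX]
        rw [if_neg (show ¬ (0 : ℤ) ≤ n - 1 - (i : ℕ) + 1 by omega)]
      rw [h0, smul_zero, smul_zero]
  · apply PowerSeries.ext
    intro n
    have hL : PowerSeries.coeff n (Phii Finv 0)
        = MvPowerSeries.coeff (fun2 n 0) (Phi2 Finv) := by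
      rw [Phii, PowerSeries.coeff_mk]
      rfl
    rw [hL, coeff_Phi2]
    simp

end
end

section
/- With w = w(t) the unique formal power series solution of w = t·φ(w), the operator identity w^2·d/dw = t·C(t)·D holds under substitution: for every formal power series f(y), t·C(t)·D( f(w(t)) ) = ( y^2·f′(y) ) evaluated at y = w(t); in particular, taking f(y) = y gives t·C(t)·Dw(t) = w(t)^2. -/
noncomputable section

def derivPS {R : Type*} [CommRing R] (f : PowerSeries R) : PowerSeries R :=
  PowerSeries.mk fun n => ((n + 1 : ℕ) : R) * PowerSeries.coeff (n + 1) f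

namespace PsAux

open PowerSeries Finset

variable {R : Type*} [CommRing R] {f g h : PowerSeries R}

lemma coeff_psComp (f g : PowerSeries R) (n : ℕ) :
    coeff n (psComp f g) = ∑ m ∈ range (n + 1), coeff m f * coeff n (g ^ m) := by
  simp [psComp]

lemma coeff_pow_eq_zero (hg : constantCoeff g = 0) {n m : ℕ} (h : n < m) :
    coeff n (g ^ m) = 0 := by
  obtain ⟨r, hr⟩ := PowerSeries.X_dvd_iff.2 hg
  rw [hr, mul_pow, mul_comm, coeff_mul_X_pow', if_neg (by omega)]

lemma X_mul_shiftPS (hg : constantCoeff g = 0) : X * shiftPS g = g := by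
  ext n
  cases n with
  | zero => simp [coeff_zero_eq_constantCoeff, map_mul, hg]
  | succ n => simp [coeff_succ_X_mul, shiftPS]

lemma coeff_psComp' (hg : constantCoeff g = 0) {n N : ℕ} (hn : n < N) (f : PowerSeries R) :
    coeff n (psComp f g) = ∑ m ∈ range N, coeff m f * coeff n (g ^ m) := by
  rw [coeff_psComp]
  refine Finset.sum_subset (by intro x hx; simp_all; omega) ?_
  intro m hm hm'
  rw [coeff_pow_eq_zero hg (by simp_all), mul_zero]

lemma coeff_psComp_aeval (hg : constantCoeff g = 0) {n N : ℕ} (hn : n < N + 1)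
    (f : PowerSeries R) :
    coeff n (psComp f g) = coeff n (Polynomial.aeval g (trunc (N + 1) f)) := by
  rw [Polynomial.aeval_eq_sum_range' (natDegree_trunc_lt f N), coeff_psComp' hg hn]
  rw [map_sum]
  refine Finset.sum_congr rfl fun m hm => ?_
  rw [coeff_smul, smul_eq_mul, coeff_trunc, if_pos (mem_range.1 hm)]

lemma coeff_aeval_eq_zero (hg : constantCoeff g = 0) {n : ℕ} {P : Polynomial R}
    (hP : ∀ m ≤ n, P.coeff m = 0) : coeff n (Polynomial.aeval g P) = 0 := by
  rw [Polynomial.aeval_eq_sum_range, map_sum]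
  refine Finset.sum_eq_zero fun i _ => ?_
  rw [coeff_smul, smul_eq_mul]
  rcases le_or_gt i n with hi | hi
  · rw [hP i hi, zero_mul]
  · rw [coeff_pow_eq_zero hg hi, mul_zero]

lemma psComp_mul (hg : constantCoeff g = 0) (f h : PowerSeries R) :
    psComp (f * h) g = psComp f g * psComp h g := by
  ext n
  rw [coeff_psComp_aeval hg (Nat.lt_succ_self n)]
  have key : coeff n (Polynomial.aeval g (trunc (n + 1) (f * h)))
      = coeff n (Polynomial.aeval g (trunc (n + 1) f * trunc (n + 1) h)) := by
    have hz : coeff n (Polynomial.aeval g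
        (trunc (n + 1) f * trunc (n + 1) h - trunc (n + 1) (f * h))) = 0 := by
      refine coeff_aeval_eq_zero hg fun m hm => ?_
      rw [Polynomial.coeff_sub, Polynomial.coeff_mul, coeff_trunc,
        if_pos (by omega), PowerSeries.coeff_mul]
      rw [sub_eq_zero]
      refine Finset.sum_congr rfl fun p hp => ?_
      have := Finset.HasAntidiagonal.mem_antidiagonal.1 hp
      rw [coeff_trunc, coeff_trunc, if_pos (by omega), if_pos (by omega)]
    rw [map_sub, map_sub] at hz
    exact (sub_eq_zero.1 hz).symm
  rw [key, map_mul, PowerSeries.coeff_mul, PowerSeries.coeff_mul]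
  refine Finset.sum_congr rfl fun p hp => ?_
  have hpn := Finset.HasAntidiagonal.mem_antidiagonal.1 hp
  rw [← coeff_psComp_aeval hg (by omega), ← coeff_psComp_aeval hg (by omega)]

end PsAux

namespace PsAux
open PowerSeries Finset
variable {R : Type*} [CommRing R] {f g h : PowerSeries R}

lemma psComp_one (g : PowerSeries R) : psComp 1 g = 1 := by
  ext n
  rw [coeff_psComp]
  rw [Finset.sum_eq_single 0 (by intro m _ hm; simp [coeff_one, hm])
    (by intro hm; simp at hm)]
  simp

lemma psComp_X_left (hg : constantCoeff g = 0) : psComp X g = g := by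
  ext n
  rw [coeff_psComp]
  rcases Nat.eq_zero_or_pos n with rfl | hn
  · simp [coeff_zero_eq_constantCoeff, hg]
  · rw [Finset.sum_eq_single 1 (by intro m _ hm; simp [coeff_X, hm])
      (by intro hm; simp at hm; omega)]
    simp [coeff_X]

lemma psComp_pow (hg : constantCoeff g = 0) (f : PowerSeries R) (k : ℕ) :
    psComp (f ^ k) g = psComp f g ^ k := by
  induction k with
  | zero => simpa using psComp_one g
  | succ k ih => rw [pow_succ, pow_succ, psComp_mul hg, ih]

lemma psComp_X_right (f : PowerSeries R) : psComp f X = f := by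
  ext n
  rw [coeff_psComp]
  rw [Finset.sum_eq_single n (by intro m _ hm; simp [coeff_X_pow, Ne.symm hm])
    (by intro hm; simp at hm)]
  simp [coeff_X_pow]

lemma constantCoeff_psComp (hg : constantCoeff g = 0) (f : PowerSeries R) :
    constantCoeff (psComp f g) = constantCoeff f := by
  rw [← coeff_zero_eq_constantCoeff, coeff_psComp]
  simp [coeff_zero_eq_constantCoeff]

lemma psComp_assoc (hg : constantCoeff g = 0) (hh : constantCoeff h = 0)
    (f : PowerSeries R) :
    psComp (psComp f g) h = psComp f (psComp g h) := by
  ext n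
  rw [coeff_psComp, coeff_psComp]
  have hgh : constantCoeff (psComp g h) = 0 := by
    rw [constantCoeff_psComp hh, hg]
  calc ∑ k ∈ range (n + 1), coeff k (psComp f g) * coeff n (h ^ k)
      = ∑ k ∈ range (n + 1), ∑ m ∈ range (n + 1),
          coeff m f * coeff k (g ^ m) * coeff n (h ^ k) := by
        refine Finset.sum_congr rfl fun k hk => ?_
        rw [coeff_psComp' (N := n + 1) hg (by simp at hk; omega), Finset.sum_mul]
    _ = ∑ m ∈ range (n + 1), coeff m f * coeff n (psComp g h ^ m) := by
        rw [Finset.sum_comm]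
        refine Finset.sum_congr rfl fun m _ => ?_
        rw [← psComp_pow hh, coeff_psComp' hh (Nat.lt_succ_self n), Finset.mul_sum]
        exact Finset.sum_congr rfl fun k _ => by ring

lemma coeff_Dop (f : PowerSeries R) (n : ℕ) : coeff n (Dop f) = n * coeff n f := by
  simp [Dop]

lemma Dop_one : Dop (1 : PowerSeries R) = 0 := by
  ext n; cases n <;> simp [coeff_Dop, coeff_one]

lemma Dop_X : Dop (X : PowerSeries R) = X := by
  ext n
  simp only [coeff_Dop, coeff_X]
  split_ifs with h
  · subst h; simp
  · simp

lemma Dop_mul (f g : PowerSeries R) : Dop (f * g) = f * Dop g + g * Dop f := by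
  ext n
  rw [coeff_Dop, map_add, PowerSeries.coeff_mul,
    show g * Dop f = Dop f * g from mul_comm _ _, PowerSeries.coeff_mul,
    PowerSeries.coeff_mul, Finset.mul_sum, ← Finset.sum_add_distrib]
  refine Finset.sum_congr rfl fun p hp => ?_
  have hpn := Finset.HasAntidiagonal.mem_antidiagonal.1 hp
  rw [coeff_Dop, coeff_Dop]
  have hc : (n : R) = (p.1 : R) + (p.2 : R) := by exact_mod_cast congrArg Nat.cast hpn.symm
  rw [hc]; ring

lemma Dop_pow_succ (g : PowerSeries R) (k : ℕ) :
    Dop (g ^ (k + 1)) = ((k + 1 : ℕ) : PowerSeries R) * (g ^ k * Dop g) := by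
  induction k with
  | zero => simp
  | succ k ih =>
    rw [pow_succ, Dop_mul, ih]
    push_cast
    ring

lemma coeff_pow_mul_Dop (hg : constantCoeff g = 0) (n : ℕ) :
    coeff n (g ^ n * Dop g) = 0 := by
  rw [PowerSeries.coeff_mul]
  refine Finset.sum_eq_zero fun p hp => ?_
  have hpn := Finset.HasAntidiagonal.mem_antidiagonal.1 hp
  rcases lt_or_eq_of_le (show p.1 ≤ n by omega) with h1 | h1
  · rw [coeff_pow_eq_zero hg h1, zero_mul]
  · have : p.2 = 0 := by omega
    rw [this, coeff_Dop]
    simp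

lemma Dop_psComp (hg : constantCoeff g = 0) (f : PowerSeries R) :
    Dop (psComp f g) = psComp (derivPS f) g * Dop g := by
  ext n
  rw [coeff_Dop, coeff_psComp, PowerSeries.coeff_mul, Finset.mul_sum]
  calc ∑ m ∈ range (n + 1), (n : R) * (coeff m f * coeff n (g ^ m))
      = ∑ m ∈ range (n + 1), coeff m f * coeff n (Dop (g ^ m)) := by
        refine Finset.sum_congr rfl fun m _ => ?_
        rw [coeff_Dop]; ring
    _ = ∑ k ∈ range n, coeff (k + 1) f * coeff n (Dop (g ^ (k + 1))) := by
        rw [Finset.sum_range_succ']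
        simp [Dop_one]
    _ = ∑ k ∈ range n, ((k + 1 : ℕ) : R) * coeff (k + 1) f
          * coeff n (g ^ k * Dop g) := by
        refine Finset.sum_congr rfl fun k _ => ?_
        rw [Dop_pow_succ, ← map_natCast (PowerSeries.C) (k + 1), coeff_C_mul]
        ring
    _ = ∑ m ∈ range (n + 1), ((m + 1 : ℕ) : R) * coeff (m + 1) f
          * coeff n (g ^ m * Dop g) := by
        rw [Finset.sum_range_succ, coeff_pow_mul_Dop hg, mul_zero, add_zero]
    _ = ∑ p ∈ antidiagonal n,
          coeff p.1 (psComp (derivPS f) g) * coeff p.2 (Dop g) := by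
        symm
        calc ∑ p ∈ antidiagonal n,
              coeff p.1 (psComp (derivPS f) g) * coeff p.2 (Dop g)
            = ∑ p ∈ antidiagonal n, ∑ m ∈ range (n + 1),
                coeff m (derivPS f) * coeff p.1 (g ^ m) * coeff p.2 (Dop g) := by
              refine Finset.sum_congr rfl fun p hp => ?_
              have hpn := Finset.HasAntidiagonal.mem_antidiagonal.1 hp
              rw [coeff_psComp' (N := n + 1) hg (by omega), Finset.sum_mul]
          _ = ∑ m ∈ range (n + 1), ∑ p ∈ antidiagonal n,
                coeff m (derivPS f) * (coeff p.1 (g ^ m) * coeff p.2 (Dop g)) := by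
              rw [Finset.sum_comm]
              exact Finset.sum_congr rfl fun p _ => Finset.sum_congr rfl fun m _ => by ring
          _ = ∑ m ∈ range (n + 1), ((m + 1 : ℕ) : R) * coeff (m + 1) f
                * coeff n (g ^ m * Dop g) := by
              refine Finset.sum_congr rfl fun m _ => ?_
              rw [← Finset.mul_sum, ← PowerSeries.coeff_mul,
                show coeff m (derivPS f) = ((m + 1 : ℕ) : R) * coeff (m + 1) f from
                  by simp [derivPS]]

lemma coeff_self_pow (hp : constantCoeff f = 0) (n : ℕ) :
    coeff n (f ^ n) = coeff 1 f ^ n := by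
  conv_lhs => rw [← X_mul_shiftPS hp]
  rw [mul_pow, mul_comm, coeff_mul_X_pow', if_pos le_rfl, Nat.sub_self,
    coeff_zero_eq_constantCoeff, map_pow]
  have : constantCoeff (shiftPS f) = coeff 1 f := by simp [shiftPS]
  rw [this]

lemma rightInj {p : PowerSeries R} (hp0 : constantCoeff p = 0) (hp1 : coeff 1 p = 1)
    {g h : PowerSeries R} (H : psComp g p = psComp h p) : g = h := by
  ext n
  induction n using Nat.strong_induction_on with
  | _ n ih =>
    have hc := congrArg (coeff n) H
    rw [coeff_psComp, coeff_psComp, Finset.sum_range_succ, Finset.sum_range_succ] at hc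
    have hsum : ∑ m ∈ range n, coeff m g * coeff n (p ^ m)
        = ∑ m ∈ range n, coeff m h * coeff n (p ^ m) :=
      Finset.sum_congr rfl fun m hm => by rw [ih m (Finset.mem_range.1 hm)]
    rw [hsum] at hc
    have hpow : coeff n (p ^ n) = 1 := by rw [coeff_self_pow hp0, hp1, one_pow]
    rw [hpow, mul_one, mul_one] at hc
    exact add_left_cancel hc

lemma pow_coeff_congr {w₁ w₂ : PowerSeries R} {n : ℕ}
    (hlt : ∀ k < n, coeff k w₁ = coeff k w₂) :
    ∀ m, ∀ b < n, coeff b (w₁ ^ m) = coeff b (w₂ ^ m) := by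
  intro m
  induction m with
  | zero => intro b _; rfl
  | succ m ih =>
    intro b hb
    rw [pow_succ, pow_succ, PowerSeries.coeff_mul, PowerSeries.coeff_mul]
    refine Finset.sum_congr rfl fun q hq => ?_
    have hqb := Finset.HasAntidiagonal.mem_antidiagonal.1 hq
    rw [ih q.1 (by omega), hlt q.2 (by omega)]

lemma pow_coeff_congr' {w₁ w₂ : PowerSeries R} {n : ℕ}
    (h1 : constantCoeff w₁ = 0) (h2 : constantCoeff w₂ = 0)
    (hlt : ∀ k < n, coeff k w₁ = coeff k w₂) {m : ℕ} (hm : 2 ≤ m) :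
    coeff n (w₁ ^ m) = coeff n (w₂ ^ m) := by
  obtain ⟨k, rfl⟩ : ∃ k, m = k + 2 := ⟨m - 2, by omega⟩
  rw [show w₁ ^ (k + 2) = w₁ * w₁ ^ (k + 1) from by ring,
    show w₂ ^ (k + 2) = w₂ * w₂ ^ (k + 1) from by ring,
    PowerSeries.coeff_mul, PowerSeries.coeff_mul]
  refine Finset.sum_congr rfl fun q hq => ?_
  have hqn := Finset.HasAntidiagonal.mem_antidiagonal.1 hq
  rcases eq_or_lt_of_le (show q.1 ≤ n by omega) with h | h
  · have hq2 : q.2 = 0 := by omega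
    simp [hq2, coeff_zero_eq_constantCoeff, map_pow, h1, h2]
  · rcases Nat.eq_zero_or_pos q.1 with hq1 | hq1
    · simp [hq1, coeff_zero_eq_constantCoeff, h1, h2]
    · rw [hlt q.1 h, pow_coeff_congr hlt (k + 1) q.2 (by omega)]

lemma leftInj {p : PowerSeries R} (hp1 : coeff 1 p = 1)
    {w₁ w₂ : PowerSeries R} (h1 : constantCoeff w₁ = 0) (h2 : constantCoeff w₂ = 0)
    (H : psComp p w₁ = psComp p w₂) : w₁ = w₂ := by
  ext n
  induction n using Nat.strong_induction_on with
  | _ n ih =>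
    rcases Nat.eq_zero_or_pos n with rfl | hn
    · rw [coeff_zero_eq_constantCoeff, h1, h2]
    have hc := congrArg (coeff n) H
    rw [coeff_psComp, coeff_psComp] at hc
    have h1' : (1 : ℕ) ∈ range (n + 1) := by simp; omega
    rw [← Finset.sum_erase_add _ _ h1', ← Finset.sum_erase_add _ _ h1'] at hc
    have hsum : ∑ m ∈ (range (n + 1)).erase 1, coeff m p * coeff n (w₁ ^ m)
        = ∑ m ∈ (range (n + 1)).erase 1, coeff m p * coeff n (w₂ ^ m) := by
      refine Finset.sum_congr rfl fun m hm => ?_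
      have hm1 : m ≠ 1 := (Finset.mem_erase.1 hm).1
      congr 1
      rcases Nat.eq_zero_or_pos m with rfl | hm0
      · rfl
      · exact pow_coeff_congr' h1 h2 ih (by omega)
    rw [hsum] at hc
    have := add_left_cancel hc
    rw [hp1, one_mul, one_mul, pow_one, pow_one] at this
    exact this

end PsAux


open PowerSeries PsAux in
theorem stmt17 (Finv : PowerSeries A) (hFinv0 : PowerSeries.constantCoeff Finv = 0)
    (hFinv : psComp Fser Finv = PowerSeries.X)
    (w : PowerSeries A) (hw0 : PowerSeries.constantCoeff w = 0)
    (hw : w = PowerSeries.X * psComp (phiSer Finv) w) :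
    (∀ f : PowerSeries A,
      PowerSeries.X * Cser * Dop (psComp f w) = psComp (PowerSeries.X ^ 2 * derivPS f) w)
    ∧ PowerSeries.X * Cser * Dop w = w ^ 2 := by
  set S : PowerSeries A := PowerSeries.invOfUnit Rser 1 with hSdef
  have hR0 : constantCoeff Rser = 1 := by
    rw [← coeff_zero_eq_constantCoeff]; simp [Rser]
  have hS : Rser * S = 1 := PowerSeries.mul_invOfUnit Rser 1 (by rw [hR0]; rfl)
  have hS0 : constantCoeff S = 1 := by
    rw [hSdef, PowerSeries.constantCoeff_invOfUnit]; rfl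
  have hFeq : Fser = PowerSeries.X * S := rfl
  have hF0 : constantCoeff Fser = 0 := by
    rw [hFeq, map_mul, PowerSeries.constantCoeff_X, zero_mul]
  have hF1 : coeff 1 Fser = 1 := by
    rw [hFeq, PowerSeries.coeff_succ_X_mul, coeff_zero_eq_constantCoeff, hS0]
  have hFinv1 : coeff 1 Finv = 1 := by
    have h := congrArg (coeff 1) hFinv
    rw [coeff_psComp, Finset.sum_range_succ, Finset.sum_range_succ,
      Finset.sum_range_zero, PowerSeries.coeff_X] at h
    simp only [pow_zero, pow_one, zero_add, coeff_zero_eq_constantCoeff, hF0, zero_mul,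
      hF1, one_mul, if_pos rfl] at h
    rcases eq_or_ne (coeff 1 Finv) 1 with h1 | h1
    · exact h1
    · simpa using h
  have hsh0 : constantCoeff (shiftPS Finv) = 1 := by
    rw [← coeff_zero_eq_constantCoeff]; simpa [shiftPS] using hFinv1
  have hshX : PowerSeries.X * shiftPS Finv = Finv := X_mul_shiftPS hFinv0
  have hphi : shiftPS Finv * phiSer Finv = 1 :=
    PowerSeries.mul_invOfUnit _ 1 (by rw [hsh0]; rfl)
  have hinv1 : psComp (shiftPS Finv) w * psComp (phiSer Finv) w = 1 := by
    rw [← psComp_mul hw0, hphi, psComp_one]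
  have hFw : psComp Finv w = PowerSeries.X := by
    calc psComp Finv w = w * psComp (shiftPS Finv) w := by
          conv_lhs => rw [← hshX]
          rw [psComp_mul hw0, psComp_X_left hw0]
      _ = (PowerSeries.X * psComp (phiSer Finv) w) * psComp (shiftPS Finv) w := by
          rw [← hw]
      _ = PowerSeries.X * (psComp (shiftPS Finv) w * psComp (phiSer Finv) w) := by ring
      _ = PowerSeries.X := by rw [hinv1, mul_one]
  have hFF : psComp Finv Fser = PowerSeries.X := by
    refine rightInj hFinv0 hFinv1 (g := psComp Finv Fser) (h := PowerSeries.X) ?_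
    rw [psComp_assoc hF0 hFinv0, hFinv, psComp_X_right, psComp_X_left hFinv0]
  have hwF : w = Fser := leftInj hFinv1 hw0 hF0 (by rw [hFw, hFF])
  have hCden0 : constantCoeff Cden = 1 := by
    rw [← coeff_zero_eq_constantCoeff]; simp [Cden]
  have hC : Cden * Cser = 1 := PowerSeries.mul_invOfUnit _ 1 (by rw [hCden0]; rfl)
  have hCdenR : Cden = Rser - Dop Rser := by
    ext n
    rw [map_sub, coeff_Dop]
    simp only [Cden, Rser, PowerSeries.coeff_mk]
    rcases n with _ | _ | n
    · simp
    · simp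
    · simp only [Nat.succ_ne_zero, if_false, show 2 ≤ n + 2 from by omega, if_pos]
      rw [MvPolynomial.smul_eq_C_mul, map_sub, map_one,
        ← map_natCast (MvPolynomial.C : ℚ →+* MvPolynomial ℕ ℚ) (n + 2)]
      push_cast
      ring
  have hDS : Rser * Dop S + S * Dop Rser = 0 := by
    have h0 : Dop (Rser * S) = 0 := by rw [hS, Dop_one]
    rw [Dop_mul] at h0
    exact h0
  have hDw : Dop w = PowerSeries.X * (Cden * (S * S)) := by
    rw [hwF, hFeq, Dop_mul, Dop_X]
    linear_combination (PowerSeries.X * S) * hDS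
      - (PowerSeries.X * S * S) * hCdenR
      - (PowerSeries.X * Dop S + S * PowerSeries.X) * hS
  have part2 : PowerSeries.X * Cser * Dop w = w ^ 2 := by
    rw [hDw, hwF, hFeq]
    linear_combination (PowerSeries.X ^ 2 * S * S) * hC
  refine ⟨fun f => ?_, part2⟩
  have hchain : Dop (psComp f w) = psComp (derivPS f) w * Dop w := Dop_psComp hw0 f
  have hrhs : psComp (PowerSeries.X ^ 2 * derivPS f) w = w ^ 2 * psComp (derivPS f) w := by
    rw [psComp_mul hw0, psComp_pow hw0, psComp_X_left hw0]
  rw [hchain, hrhs]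
  linear_combination (psComp (derivPS f) w) * part2

end
end
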